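/- Let n : ℕ and let Q : QuadraticForm ℚ (Fin n → ℚ) be the negative definite form with Q w = -(∑ j, (w j)^2) for all w. Let 𝒪 be a subring of CliffordAlgebra Q such that every element of 𝒪 is integral over ℤ and ι Q (Pi.single j 1) ∈ 𝒪 for every j : Fin n. If c : ℚ and w : Fin n → ℚ are such that algebraMap ℚ (CliffordAlgebra Q) c + ι Q w ∈ 𝒪, then there exist m₀ : ℤ and m : Fin n → ℤ with (m₀ : ℚ) = 2*c, (m j : ℚ) = 2 * w j for every j, and (4 : ℤ) ∣ m₀^2 + ∑ j, (m j)^2. -/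

import Mathlib

/-! For `v ≠ 0` the element `x = c + ι v` is not a scalar and satisfies
`x² - 2c·x + (c² - Q v) = 0`, so this quadratic is its minimal polynomial over `ℚ`. By Gauss's
lemma an element integral over `ℤ` has a minimal polynomial with integer coefficients, so `2c` and
`c² - Q v = c² + ∑ vⱼ²` are integers. With `eⱼ = ι (Pi.single j 1)`, so that `eⱼ² = -1`, the
order also contains `x - eⱼ x eⱼ = 2c + 2wⱼ eⱼ` for `x = c + ι w`, whose norm `(2c)² + (2wⱼ)²` is
therefore an integer, hence so is `2wⱼ`. Finally
`(2c)² + ∑ (2wⱼ)² = 4 (c² + ∑ wⱼ²)`. -/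

open Polynomial

theorem minpoly_eq_quadratic_of_notMem_range {K A : Type*} [Field K] [Ring A] [Algebra K A]
    {x : A} {t s : K} (hx : x ∉ Set.range (algebraMap K A))
    (hroot : aeval x (X ^ 2 - C t * X + C s) = 0) :
    minpoly K x = X ^ 2 - C t * X + C s := by
  have : Nontrivial A := by
    by_contra h
    rw [not_nontrivial_iff_subsingleton] at h
    exact hx ⟨0, Subsingleton.elim _ _⟩
  have hmonic : (X ^ 2 - C t * X + C s).Monic := by monicity!
  have hdeg : (X ^ 2 - C t * X + C s).natDegree = 2 := by compute_degree!
  have hint : IsIntegral K x := ⟨_, hmonic, hroot⟩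
  refine (eq_of_monic_of_dvd_of_natDegree_le (minpoly.monic hint) hmonic
    (minpoly.dvd K x hroot) ?_).symm
  rw [hdeg]
  exact (minpoly.two_le_natDegree_iff hint).2 hx

theorem IsIntegral.isIntegral_coeff_minpoly {R K A : Type*} [CommRing R] [IsIntegrallyClosed R]
    [Field K] [Algebra R K] [IsFractionRing R K] [Ring A] [Algebra K A] [Algebra R A]
    [IsScalarTower R K A] {x : A} (hx : IsIntegral R x) (i : ℕ) :
    IsIntegral R ((minpoly K x).coeff i) := by
  have hmonic : (minpoly K x).Monic := minpoly.monic (hx.tower_top (A := K))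
  obtain ⟨p, hp, hpx⟩ := hx
  have hdvd : minpoly K x ∣ p.map (algebraMap R K) :=
    minpoly.dvd K x (by rwa [aeval_map_algebraMap, aeval_def])
  obtain ⟨g, hg⟩ := IsIntegrallyClosed.eq_map_mul_C_of_dvd K hp hdvd
  rw [hmonic.leadingCoeff, map_one, mul_one] at hg
  rw [← hg, coeff_map]
  exact isIntegral_algebraMap

namespace CliffordAlgebra

section CommRing

variable {R M : Type*} [CommRing R] [AddCommGroup M] [Module R M] (Q : QuadraticForm R M)

theorem ι_eq_algebraMap_iff [Invertible (2 : R)] (x : M) (r : R) :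
    ι Q x = algebraMap R _ r ↔ x = 0 ∧ r = 0 := by
  rw [← ExteriorAlgebra.ι_eq_algebraMap_iff, ← (equivExterior Q).injective.eq_iff]
  simp [changeForm_ι, changeForm_algebraMap]

theorem aeval_algebraMap_add_ι (c : R) (v : M) :
    aeval (algebraMap R _ c + ι Q v) (X ^ 2 - C (2 * c) * X + C (c ^ 2 - Q v)) = 0 := by
  simp only [map_add, map_sub, map_mul, map_pow, aeval_X, aeval_C, map_ofNat]
  rw [sq, add_mul, mul_add, mul_add, ι_sq_scalar, ← Algebra.commutes c (ι Q v)]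
  noncomm_ring

theorem ι_mul_algebraMap_add_ι_mul_ι (e w : M) (c : R) :
    ι Q e * (algebraMap R _ c + ι Q w) * ι Q e =
      algebraMap R _ (Q e * c) + ι Q (QuadraticMap.polar Q e w • e - Q e • w) := by
  rw [mul_add, add_mul, ι_mul_ι_mul_ι, ← Algebra.commutes, mul_assoc, ι_sq_scalar, ← map_mul,
    mul_comm]

end CommRing

theorem isIntegral_two_mul_and_sq_sub_of_isIntegral {R K M : Type*} [CommRing R]
    [IsIntegrallyClosed R] [Field K] [Algebra R K] [IsFractionRing R K] [Invertible (2 : K)]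
    [AddCommGroup M] [Module K M] {Q : QuadraticForm K M} [Algebra R (CliffordAlgebra Q)]
    [IsScalarTower R K (CliffordAlgebra Q)] {c : K} {v : M}
    (h : IsIntegral R (algebraMap K _ c + ι Q v)) :
    IsIntegral R (2 * c) ∧ IsIntegral R (c ^ 2 - Q v) := by
  by_cases hv : v = 0
  · subst hv
    rw [map_zero, add_zero,
      isIntegral_algebraMap_iff (algebraMap K (CliffordAlgebra Q)).injective] at h
    exact ⟨by simpa using (isIntegral_natCast 2).mul h, by simpa using h.pow 2⟩
  have hnotMem : algebraMap K _ c + ι Q v ∉ Set.range (algebraMap K (CliffordAlgebra Q)) := by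
    rintro ⟨r, hr⟩
    rw [eq_comm, ← eq_sub_iff_add_eq', ← map_sub, ι_eq_algebraMap_iff] at hr
    exact hv hr.1
  have hmin := minpoly_eq_quadratic_of_notMem_range hnotMem (aeval_algebraMap_add_ι Q c v)
  have h1 := h.isIntegral_coeff_minpoly (K := K) 1
  have h0 := h.isIntegral_coeff_minpoly (K := K) 0
  rw [hmin] at h1 h0
  exact ⟨by simpa [-map_pow] using h1, by simpa [-map_pow] using h0⟩

end CliffordAlgebra

section NegSumSq

variable {R σ : Type*} [CommRing R] [Fintype σ] [DecidableEq σ] {Q : QuadraticForm R (σ → R)}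
  (hQ : ∀ w : σ → R, Q w = -(∑ j, (w j) ^ 2))
include hQ

theorem apply_smul_single_one_of_eq_neg_sum_sq (a : R) (j : σ) :
    Q (a • Pi.single j 1) = -a ^ 2 := by
  simp [hQ, Pi.single_apply]

theorem polar_single_one_of_eq_neg_sum_sq (j : σ) (w : σ → R) :
    QuadraticMap.polar Q (Pi.single j 1) w = -(2 * w j) := by
  have hsum : ∑ i, 2 * (Pi.single j 1 : σ → R) i * w i = 2 * w j := by simp [Pi.single_apply]
  simp only [QuadraticMap.polar, hQ, Pi.add_apply, add_sq, Finset.sum_add_distrib, ← hsum]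
  ring

theorem algebraMap_add_ι_sub_conj_single_of_eq_neg_sum_sq (c : R) (w : σ → R) (j : σ) :
    algebraMap R _ c + CliffordAlgebra.ι Q w -
        CliffordAlgebra.ι Q (Pi.single j 1) * (algebraMap R _ c + CliffordAlgebra.ι Q w) *
          CliffordAlgebra.ι Q (Pi.single j 1) =
      algebraMap R _ (2 * c) + CliffordAlgebra.ι Q ((2 * w j) • Pi.single j 1) := by
  have hQe : Q (Pi.single j 1) = -1 := by
    simpa using apply_smul_single_one_of_eq_neg_sum_sq hQ 1 j
  rw [CliffordAlgebra.ι_mul_algebraMap_add_ι_mul_ι, polar_single_one_of_eq_neg_sum_sq hQ, hQe]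
  simp only [neg_one_mul, neg_smul, one_smul, sub_neg_eq_add, map_add, map_neg, two_mul]
  abel

end NegSumSq

theorem order_gives_doubly_even_code {n : ℕ} (Q : QuadraticForm ℚ (Fin n → ℚ))
    (hQ : ∀ w : Fin n → ℚ, Q w = -(∑ j, (w j) ^ 2))
    (𝒪 : Subring (CliffordAlgebra Q))
    (hint : ∀ x ∈ 𝒪, IsIntegral ℤ x)
    (hgen : ∀ j : Fin n, CliffordAlgebra.ι Q (Pi.single j 1) ∈ 𝒪)
    (c : ℚ) (w : Fin n → ℚ)
    (hmem : algebraMap ℚ (CliffordAlgebra Q) c + CliffordAlgebra.ι Q w ∈ 𝒪) :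
    ∃ (m₀ : ℤ) (m : Fin n → ℤ), (m₀ : ℚ) = 2 * c ∧ (∀ j, (m j : ℚ) = 2 * w j) ∧
      (4 : ℤ) ∣ m₀ ^ 2 + ∑ j, (m j) ^ 2 := by
  obtain ⟨h2c, hnorm⟩ :=
    CliffordAlgebra.isIntegral_two_mul_and_sq_sub_of_isIntegral (hint _ hmem)
  have h2w (j : Fin n) : IsIntegral ℤ (2 * w j) := by
    have hconj := hint _ (𝒪.sub_mem hmem (𝒪.mul_mem (𝒪.mul_mem (hgen j) hmem) (hgen j)))
    rw [algebraMap_add_ι_sub_conj_single_of_eq_neg_sum_sq hQ] at hconj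
    have hsq :=
      (CliffordAlgebra.isIntegral_two_mul_and_sq_sub_of_isIntegral hconj).2.sub (h2c.pow 2)
    rw [apply_smul_single_one_of_eq_neg_sum_sq hQ] at hsq
    exact IsIntegral.of_pow two_pos (by simpa using hsq)
  obtain ⟨m₀, hm₀⟩ := IsIntegrallyClosed.isIntegral_iff.mp h2c
  choose m hm using fun j ↦ IsIntegrallyClosed.isIntegral_iff.mp (h2w j)
  obtain ⟨l, hl⟩ := IsIntegrallyClosed.isIntegral_iff.mp hnorm
  simp only [algebraMap_int_eq, eq_intCast] at hm₀ hm hl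
  refine ⟨m₀, m, hm₀, hm, l, ?_⟩
  rw [← Int.cast_inj (α := ℚ)]
  push_cast
  rw [hm₀, hl, hQ]
  simp only [mul_pow, hm, ← Finset.mul_sum, sub_neg_eq_add]
  ring
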